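/- Let E be a pseudo effect algebra satisfying (RDP), let s₁, s₂ be states on E, and let F₁, F₂ be the faces of S(E) generated by s₁ and s₂ respectively. The following are equivalent: (i) F₁ ∩ F₂ = ∅; (ii) s₁ ⋀ s₂ = 0 in the lattice J(E); (iii) s₁ ⋁ s₂ = s₁ + s₂ in J(E); (iv) for every x ∈ E and every ε > 0 there exist x₁, x₂ ∈ E with x = x₁ + x₂ and sᵢ(x ∕ xᵢ) < ε for i = 1, 2, where for a ≤ b, b ∕ a denotes the unique element with (b ∕ a) + a = b. -/

import Mathlib

/-- A pseudo effect algebra: a partial algebra `(E; +, 0, 1)` where the partial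
addition is encoded as `padd : E → E → Option E` (`padd a b = some c` means
`a + b` is defined and equals `c`). -/
class PseudoEffectAlgebra (E : Type) where
  padd : E → E → Option E
  pzero : E
  pone : E
  /-- (i) `a+b` and `(a+b)+c` exist iff `b+c` and `a+(b+c)` exist ... -/
  assoc_defined : ∀ a b c : E,
    (∃ x, padd a b = some x ∧ (padd x c).isSome) ↔
      (∃ y, padd b c = some y ∧ (padd a y).isSome)
  /-- ... and in this case `(a+b)+c = a+(b+c)`. -/
  assoc_eq : ∀ a b c x y : E, padd a b = some x → padd b c = some y →
    padd x c = padd a y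
  /-- (ii) there is exactly one `d` with `a + d = 1`. -/
  exists_unique_right : ∀ a : E, ∃! d, padd a d = some pone
  /-- (ii) there is exactly one `e` with `e + a = 1`. -/
  exists_unique_left : ∀ a : E, ∃! e, padd e a = some pone
  /-- (iii) if `a+b` exists, there are `d, e` with `a+b = d+a = b+e`. -/
  shift : ∀ a b c : E, padd a b = some c →
    ∃ d e, padd d a = some c ∧ padd b e = some c
  /-- (iv) if `1+a` exists then `a = 0`. -/
  one_add : ∀ a : E, (padd pone a).isSome → a = pzero
  /-- (iv) if `a+1` exists then `a = 0`. -/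
  add_one : ∀ a : E, (padd a pone).isSome → a = pzero

namespace PseudoEffectAlgebra

variable {E : Type} [PseudoEffectAlgebra E]

/-- The induced partial order: `a ≤ b` iff `b = a + c` for some `c ∈ E`. -/
def pLe (a b : E) : Prop := ∃ c, padd a c = some b

/-- The Riesz Decomposition Property (RDP). -/
def RDP (E : Type) [PseudoEffectAlgebra E] : Prop :=
  ∀ a₁ a₂ b₁ b₂ c : E, padd a₁ a₂ = some c → padd b₁ b₂ = some c →
    ∃ d₁ d₂ d₃ d₄ : E, padd d₁ d₂ = some a₁ ∧ padd d₃ d₄ = some a₂ ∧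
      padd d₁ d₃ = some b₁ ∧ padd d₂ d₄ = some b₂

/-- A signed measure on `E`. -/
def IsSignedMeasure (m : E → ℝ) : Prop :=
  ∀ a b c : E, padd a b = some c → m c = m a + m b

/-- A (positive) measure on `E`. -/
def IsMeasure (m : E → ℝ) : Prop :=
  IsSignedMeasure m ∧ ∀ a : E, 0 ≤ m a

/-- A state on `E`. -/
def IsState (s : E → ℝ) : Prop := IsMeasure s ∧ s pone = 1

/-- A Jordan signed measure: a difference of two measures. -/
def IsJordan (m : E → ℝ) : Prop :=
  ∃ m₁ m₂ : E → ℝ, IsMeasure m₁ ∧ IsMeasure m₂ ∧ m = m₁ - m₂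

/-- `m ≤⁺ m'` iff `m' - m` is a (positive) measure. -/
def MLe (m m' : E → ℝ) : Prop := IsMeasure (m' - m)

/-- The (partial) sum `x₁ + ⋯ + xₙ` of a nonempty list of elements of `E`. -/
def lsum : List E → Option E
  | [] => some pzero
  | [a] => some a
  | a :: b :: l => (lsum (b :: l)).bind (fun s => padd a s)

/-- `m` is the supremum, in the po-group `J(E)` of Jordan signed measures ordered
by `≤⁺`, of the set `S`. -/
def IsSupIn (S : Set (E → ℝ)) (m : E → ℝ) : Prop :=
  IsJordan m ∧ (∀ t ∈ S, MLe t m) ∧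
    ∀ h : E → ℝ, IsJordan h → (∀ t ∈ S, MLe t h) → MLe m h

/-- `m` is the infimum, in the po-group `J(E)` of Jordan signed measures ordered
by `≤⁺`, of the set `S`. -/
def IsInfIn (S : Set (E → ℝ)) (m : E → ℝ) : Prop :=
  IsJordan m ∧ (∀ t ∈ S, MLe m t) ∧
    ∀ h : E → ℝ, IsJordan h → (∀ t ∈ S, MLe h t) → MLe h m

variable (E) in
/-- The state space `S(E)`. -/
def stateSet : Set (E → ℝ) := {s | IsState s}

variable (E) in
/-- A face of the convex set `S(E)`. -/
def IsFace (F : Set (E → ℝ)) : Prop :=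
  F ⊆ stateSet E ∧
  (∀ s₁ ∈ F, ∀ s₂ ∈ F, ∀ lam : ℝ, 0 ≤ lam → lam ≤ 1 →
    lam • s₁ + (1 - lam) • s₂ ∈ F) ∧
  (∀ s₁ ∈ stateSet E, ∀ s₂ ∈ stateSet E, ∀ lam : ℝ, 0 < lam → lam < 1 →
    lam • s₁ + (1 - lam) • s₂ ∈ F → s₁ ∈ F ∧ s₂ ∈ F)

variable (E) in
/-- The face of `S(E)` generated by a set `X` (the smallest face containing `X`). -/
def faceGen (X : Set (E → ℝ)) : Set (E → ℝ) :=
  ⋂₀ {F : Set (E → ℝ) | IsFace E F ∧ X ⊆ F}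

/-! The infimum of two measures in `J(E)` is `(m₁ ⋀ m₂)(x) = inf {m₁ a + m₂ b : x = a + b}`: the
shift axiom makes it subadditive and RDP makes it superadditive. The face generated by a state `s`
is the set of states dominated by a multiple of `s`, so the faces of `s₁` and `s₂` meet exactly
when a nonzero measure lies below both, i.e. when `s₁ ⋀ s₂ ≠ 0`. Condition (iv) says that
`s₂ ⋀ s₁` vanishes pointwise, and (iii) is the lattice-group identity
`a ⋁ b = a + b - a ⋀ b`, which comes from the order-reversing involution `h ↦ a + b - h`. -/

lemma padd_reassoc_right {a b c x z : E} (h₁ : padd a b = some x) (h₂ : padd x c = some z) :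
    ∃ y, padd b c = some y ∧ padd a y = some z := by
  obtain ⟨y, hy, -⟩ := (assoc_defined a b c).mp ⟨x, h₁, by simp [h₂]⟩
  exact ⟨y, hy, (assoc_eq a b c x y h₁ hy).symm.trans h₂⟩

lemma padd_reassoc_left {a b c y z : E} (h₁ : padd b c = some y) (h₂ : padd a y = some z) :
    ∃ x, padd a b = some x ∧ padd x c = some z := by
  obtain ⟨x, hx, -⟩ := (assoc_defined a b c).mpr ⟨y, h₁, by simp [h₂]⟩
  exact ⟨x, hx, (assoc_eq a b c x y hx h₁).trans h₂⟩

lemma pone_padd_pzero : padd (pone : E) pzero = some pone := by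
  obtain ⟨d, hd, -⟩ := exists_unique_right (pone : E)
  rwa [one_add d (by simp [hd])] at hd

lemma pzero_padd_pone : padd (pzero : E) pone = some pone := by
  obtain ⟨e, he, -⟩ := exists_unique_left (pone : E)
  rwa [add_one e (by simp [he])] at he

lemma padd_pzero (a : E) : padd a pzero = some a := by
  obtain ⟨e, he, -⟩ := exists_unique_left a
  obtain ⟨y, hy, hey⟩ := padd_reassoc_right he pone_padd_pzero
  obtain ⟨d, -, hd⟩ := exists_unique_right e
  rw [hy, hd y hey, hd a he]

lemma pzero_padd (a : E) : padd pzero a = some a := by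
  obtain ⟨d, hd, -⟩ := exists_unique_right a
  obtain ⟨x, hx, hxd⟩ := padd_reassoc_left hd pzero_padd_pone
  obtain ⟨e, -, he⟩ := exists_unique_left d
  rw [hx, he x hxd, he a hd]

section Measures

variable {m m' : E → ℝ}

lemma IsSignedMeasure.map_pzero (hm : IsSignedMeasure m) : m pzero = 0 := by
  linarith [hm _ _ _ (padd_pzero (pzero : E))]

lemma IsSignedMeasure.add (hm : IsSignedMeasure m) (hm' : IsSignedMeasure m') :
    IsSignedMeasure (m + m') := fun a b c h => by
  simp only [Pi.add_apply, hm a b c h, hm' a b c h]; ring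

lemma IsSignedMeasure.sub (hm : IsSignedMeasure m) (hm' : IsSignedMeasure m') :
    IsSignedMeasure (m - m') := fun a b c h => by
  simp only [Pi.sub_apply, hm a b c h, hm' a b c h]; ring

lemma IsSignedMeasure.const_smul (hm : IsSignedMeasure m) (r : ℝ) :
    IsSignedMeasure (r • m) := fun a b c h => by
  simp only [Pi.smul_apply, smul_eq_mul, hm a b c h]; ring

lemma IsMeasure.zero : IsMeasure (0 : E → ℝ) :=
  ⟨fun _ _ _ _ => by simp, fun _ => le_rfl⟩

lemma IsMeasure.add (hm : IsMeasure m) (hm' : IsMeasure m') : IsMeasure (m + m') :=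
  ⟨hm.1.add hm'.1, fun x => add_nonneg (hm.2 x) (hm'.2 x)⟩

lemma IsMeasure.const_smul (hm : IsMeasure m) {r : ℝ} (hr : 0 ≤ r) : IsMeasure (r • m) :=
  ⟨hm.1.const_smul r, fun x => mul_nonneg hr (hm.2 x)⟩

lemma IsMeasure.le_apply_pone (hm : IsMeasure m) (x : E) : m x ≤ m pone := by
  obtain ⟨c, hc, -⟩ := exists_unique_right x
  linarith [hm.1 _ _ _ hc, hm.2 c]

lemma IsMeasure.isJordan (hm : IsMeasure m) : IsJordan m :=
  ⟨m, 0, hm, IsMeasure.zero, (sub_zero m).symm⟩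

lemma IsJordan.isSignedMeasure (hm : IsJordan m) : IsSignedMeasure m := by
  obtain ⟨p, q, hp, hq, rfl⟩ := hm
  exact hp.1.sub hq.1

lemma IsJordan.add (hm : IsJordan m) (hm' : IsJordan m') : IsJordan (m + m') := by
  obtain ⟨p, q, hp, hq, rfl⟩ := hm
  obtain ⟨p', q', hp', hq', rfl⟩ := hm'
  exact ⟨p + p', q + q', hp.add hp', hq.add hq', by abel⟩

lemma IsJordan.sub (hm : IsJordan m) (hm' : IsJordan m') : IsJordan (m - m') := by
  obtain ⟨p, q, hp, hq, rfl⟩ := hm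
  obtain ⟨p', q', hp', hq', rfl⟩ := hm'
  exact ⟨p + q', q + p', hp.add hq', hq.add hp', by abel⟩

lemma MLe.le (h : MLe m m') (x : E) : m x ≤ m' x :=
  sub_nonneg.1 (h.2 x)

lemma MLe.antisymm (h : MLe m m') (h' : MLe m' m) : m = m' :=
  funext fun x => le_antisymm (h.le x) (h'.le x)

lemma mLe_of_le (hm : IsSignedMeasure m) (hm' : IsSignedMeasure m') (h : ∀ x, m x ≤ m' x) :
    MLe m m' :=
  ⟨hm'.sub hm, fun x => sub_nonneg.2 (h x)⟩

lemma zero_mLe_iff : MLe 0 m ↔ IsMeasure m := by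
  rw [MLe, sub_zero]

lemma mLe_sub_iff {c : E → ℝ} : MLe m (c - m') ↔ MLe m' (c - m) := by
  rw [MLe, MLe, sub_right_comm]

lemma sub_mLe_sub_iff {c : E → ℝ} : MLe (c - m) (c - m') ↔ MLe m' m := by
  rw [MLe, MLe, sub_sub_sub_cancel_left]

end Measures

section Lattice

lemma IsInfIn.unique {S : Set (E → ℝ)} {m m' : E → ℝ} (h : IsInfIn S m) (h' : IsInfIn S m') :
    m = m' :=
  (h'.2.2 m h.1 h.2.1).antisymm (h.2.2 m' h'.1 h'.2.1)

lemma isSupIn_sub_iff {S : Set (E → ℝ)} {c m : E → ℝ} (hc : IsJordan c) :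
    IsSupIn S (c - m) ↔ IsInfIn ((c - ·) '' S) m := by
  have hJ : ∀ {k}, IsJordan (c - k) ↔ IsJordan k :=
    ⟨fun h => by simpa using hc.sub h, hc.sub⟩
  simp only [IsSupIn, IsInfIn, Set.forall_mem_image, hJ]
  refine and_congr_right fun _ => and_congr (forall₂_congr fun _ _ => mLe_sub_iff)
    ⟨fun H k hk hlb => ?_, fun H h hh hub => ?_⟩
  · exact sub_mLe_sub_iff.1 (H (c - k) (hJ.2 hk) fun t ht => mLe_sub_iff.1 (hlb ht))
  · have := H (c - h) (hJ.2 hh) fun t ht => sub_mLe_sub_iff.2 (hub t ht)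
    rwa [← sub_mLe_sub_iff (c := c), sub_sub_cancel] at this

lemma isSupIn_add_iff_isInfIn_zero {a b : E → ℝ} (ha : IsJordan a) (hb : IsJordan b) :
    IsSupIn {a, b} (a + b) ↔ IsInfIn {a, b} 0 := by
  have := isSupIn_sub_iff (S := {a, b}) (m := 0) (ha.add hb)
  rwa [sub_zero, Set.image_pair, add_sub_cancel_left, add_sub_cancel_right,
    Set.pair_comm b a] at this

end Lattice

section InfMeasure

variable {m₁ m₂ : E → ℝ}

def decompSums (m₁ m₂ : E → ℝ) (x : E) : Set ℝ :=
  {r | ∃ a b, padd a b = some x ∧ m₁ a + m₂ b = r}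

noncomputable def infMeasure (m₁ m₂ : E → ℝ) (x : E) : ℝ :=
  sInf (decompSums m₁ m₂ x)

lemma decompSums_nonempty (x : E) : (decompSums m₁ m₂ x).Nonempty :=
  ⟨_, pzero, x, pzero_padd x, rfl⟩

lemma bddBelow_decompSums (hm₁ : IsMeasure m₁) (hm₂ : IsMeasure m₂) (x : E) :
    BddBelow (decompSums m₁ m₂ x) :=
  ⟨0, by rintro _ ⟨a, b, -, rfl⟩; exact add_nonneg (hm₁.2 a) (hm₂.2 b)⟩

lemma infMeasure_nonneg (hm₁ : IsMeasure m₁) (hm₂ : IsMeasure m₂) (x : E) :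
    0 ≤ infMeasure m₁ m₂ x :=
  le_csInf (decompSums_nonempty x) <| by
    rintro _ ⟨a, b, -, rfl⟩
    exact add_nonneg (hm₁.2 a) (hm₂.2 b)

lemma infMeasure_le (hm₁ : IsMeasure m₁) (hm₂ : IsMeasure m₂) {a b x : E}
    (h : padd a b = some x) : infMeasure m₁ m₂ x ≤ m₁ a + m₂ b :=
  csInf_le (bddBelow_decompSums hm₁ hm₂ x) ⟨a, b, h, rfl⟩

lemma infMeasure_le_left (hm₁ : IsMeasure m₁) (hm₂ : IsMeasure m₂) (x : E) :
    infMeasure m₁ m₂ x ≤ m₁ x := by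
  simpa [hm₂.1.map_pzero] using infMeasure_le hm₁ hm₂ (padd_pzero x)

lemma infMeasure_le_right (hm₁ : IsMeasure m₁) (hm₂ : IsMeasure m₂) (x : E) :
    infMeasure m₁ m₂ x ≤ m₂ x := by
  simpa [hm₁.1.map_pzero] using infMeasure_le hm₁ hm₂ (pzero_padd x)

lemma le_infMeasure {h : E → ℝ} (hh : IsSignedMeasure h) (h₁ : ∀ x, h x ≤ m₁ x)
    (h₂ : ∀ x, h x ≤ m₂ x) (x : E) : h x ≤ infMeasure m₁ m₂ x :=
  le_csInf (decompSums_nonempty x) <| by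
    rintro _ ⟨a, b, hab, rfl⟩
    rw [hh a b x hab]
    exact add_le_add (h₁ a) (h₂ b)

lemma infMeasure_le_add (hm₁ : IsMeasure m₁) (hm₂ : IsMeasure m₂) {x y z : E}
    (hz : padd x y = some z) :
    infMeasure m₁ m₂ z ≤ infMeasure m₁ m₂ x + infMeasure m₁ m₂ y := by
  unfold infMeasure
  rw [← csInf_add (decompSums_nonempty x) (bddBelow_decompSums hm₁ hm₂ x)
    (decompSums_nonempty y) (bddBelow_decompSums hm₁ hm₂ y)]
  refine le_csInf ((decompSums_nonempty x).add (decompSums_nonempty y)) ?_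
  rintro _ ⟨_, ⟨a₁, a₂, ha, rfl⟩, _, ⟨b₁, b₂, hb, rfl⟩, rfl⟩
  show infMeasure m₁ m₂ z ≤ m₁ a₁ + m₂ a₂ + (m₁ b₁ + m₂ b₂)
  -- `z = a₁ + (a₂ + b₁) + b₂ = (a₁ + b₁) + (q + b₂)`, where `a₂ + b₁ = b₁ + q`
  obtain ⟨w, hw, hzw⟩ := padd_reassoc_right ha hz
  obtain ⟨u, hu, huw⟩ := padd_reassoc_left hb hw
  obtain ⟨-, q, -, hq⟩ := shift a₂ b₁ u hu
  obtain ⟨v, hv, hwv⟩ := padd_reassoc_right hq huw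
  obtain ⟨z₁, hz₁, hzv⟩ := padd_reassoc_left hwv hzw
  have := infMeasure_le hm₁ hm₂ hzv
  linarith [hm₁.1 _ _ _ hz₁, hm₂.1 _ _ _ hv, hm₂.1 _ _ _ hu, hm₂.1 _ _ _ hq]

lemma add_le_infMeasure (hRDP : RDP E) (hm₁ : IsMeasure m₁) (hm₂ : IsMeasure m₂) {x y z : E}
    (hz : padd x y = some z) :
    infMeasure m₁ m₂ x + infMeasure m₁ m₂ y ≤ infMeasure m₁ m₂ z := by
  refine le_csInf (decompSums_nonempty z) ?_
  rintro _ ⟨z₁, z₂, hzd, rfl⟩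
  obtain ⟨d₁, d₂, d₃, d₄, h₁₂, h₃₄, h₁₃, h₂₄⟩ := hRDP z₁ z₂ x y z hzd hz
  linarith [infMeasure_le hm₁ hm₂ h₁₃, infMeasure_le hm₁ hm₂ h₂₄, hm₁.1 _ _ _ h₁₂,
    hm₂.1 _ _ _ h₃₄]

lemma isMeasure_infMeasure (hRDP : RDP E) (hm₁ : IsMeasure m₁) (hm₂ : IsMeasure m₂) :
    IsMeasure (infMeasure m₁ m₂) :=
  ⟨fun _ _ _ h => le_antisymm (infMeasure_le_add hm₁ hm₂ h) (add_le_infMeasure hRDP hm₁ hm₂ h),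
    infMeasure_nonneg hm₁ hm₂⟩

lemma isInfIn_infMeasure (hRDP : RDP E) (hm₁ : IsMeasure m₁) (hm₂ : IsMeasure m₂) :
    IsInfIn {m₁, m₂} (infMeasure m₁ m₂) := by
  have hd := (isMeasure_infMeasure hRDP hm₁ hm₂).1
  refine ⟨(isMeasure_infMeasure hRDP hm₁ hm₂).isJordan, ?_, fun h hJ hlb => ?_⟩
  · rintro t (rfl | rfl)
    exacts [mLe_of_le hd hm₁.1 (infMeasure_le_left hm₁ hm₂),
      mLe_of_le hd hm₂.1 (infMeasure_le_right hm₁ hm₂)]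
  · exact mLe_of_le hJ.isSignedMeasure hd <| le_infMeasure hJ.isSignedMeasure
      (hlb m₁ (.inl rfl)).le (hlb m₂ (.inr rfl)).le

lemma isInfIn_zero_iff_infMeasure_eq_zero (hRDP : RDP E) (hm₁ : IsMeasure m₁)
    (hm₂ : IsMeasure m₂) : IsInfIn {m₁, m₂} 0 ↔ infMeasure m₁ m₂ = 0 :=
  ⟨(isInfIn_infMeasure hRDP hm₁ hm₂).unique, fun h => h ▸ isInfIn_infMeasure hRDP hm₁ hm₂⟩

lemma isInfIn_zero_iff_forall_isMeasure (hRDP : RDP E) (hm₁ : IsMeasure m₁)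
    (hm₂ : IsMeasure m₂) :
    IsInfIn {m₁, m₂} 0 ↔ ∀ m, IsMeasure m → MLe m m₁ → MLe m m₂ → m = 0 := by
  refine ⟨fun h m hm h₁ h₂ => ?_, fun h => ?_⟩
  · exact (h.2.2 m hm.isJordan (by rintro t (rfl | rfl); exacts [h₁, h₂])).antisymm
      (zero_mLe_iff.2 hm)
  · have hd := isInfIn_infMeasure hRDP hm₁ hm₂
    exact (isInfIn_zero_iff_infMeasure_eq_zero hRDP hm₁ hm₂).2 <|
      h _ (isMeasure_infMeasure hRDP hm₁ hm₂) (hd.2.1 m₁ (.inl rfl)) (hd.2.1 m₂ (.inr rfl))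

lemma infMeasure_eq_zero_iff (hm₁ : IsMeasure m₁) (hm₂ : IsMeasure m₂) :
    infMeasure m₁ m₂ = 0 ↔
      ∀ x : E, ∀ ε : ℝ, 0 < ε → ∃ a b, padd a b = some x ∧ m₁ a < ε ∧ m₂ b < ε := by
  refine ⟨fun h x ε hε => ?_, fun h => funext fun x => ?_⟩
  · have hlt : sInf (decompSums m₁ m₂ x) < ε := by
      rw [← infMeasure, h]; exact hε
    obtain ⟨_, ⟨a, b, hab, rfl⟩, hab_lt⟩ := exists_lt_of_csInf_lt (decompSums_nonempty x) hlt
    exact ⟨a, b, hab, by linarith [hm₂.2 b], by linarith [hm₁.2 a]⟩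
  · refine le_antisymm (le_of_forall_pos_lt_add fun ε hε => ?_) (infMeasure_nonneg hm₁ hm₂ x)
    obtain ⟨a, b, hab, ha, hb⟩ := h x (ε / 2) (half_pos hε)
    rw [Pi.zero_apply, zero_add]
    linarith [infMeasure_le hm₁ hm₂ hab]

lemma exists_leftDiff_lt_iff (hm₁ : IsSignedMeasure m₁) (hm₂ : IsSignedMeasure m₂) (x : E)
    (ε : ℝ) :
    (∃ x₁ x₂ c₁ c₂ : E, padd x₁ x₂ = some x ∧ padd c₁ x₁ = some x ∧ padd c₂ x₂ = some x ∧
      m₁ c₁ < ε ∧ m₂ c₂ < ε) ↔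
    ∃ x₁ x₂, padd x₁ x₂ = some x ∧ m₂ x₁ < ε ∧ m₁ x₂ < ε := by
  refine ⟨fun ⟨x₁, x₂, c₁, c₂, h, h₁, h₂, lt₁, lt₂⟩ => ?_, fun ⟨x₁, x₂, h, lt₁, lt₂⟩ => ?_⟩
  · exact ⟨x₁, x₂, h, by linarith [hm₂ _ _ _ h, hm₂ _ _ _ h₂],
      by linarith [hm₁ _ _ _ h, hm₁ _ _ _ h₁]⟩
  · obtain ⟨c₁, e, h₁, he⟩ := shift x₁ x₂ x h
    obtain ⟨c₂, -, h₂, -⟩ := shift x₂ e x he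
    exact ⟨x₁, x₂, c₁, c₂, h, h₁, h₂, by linarith [hm₁ _ _ _ h, hm₁ _ _ _ h₁],
      by linarith [hm₂ _ _ _ h, hm₂ _ _ _ h₂]⟩

end InfMeasure

section Faces

def dominatedStates (s : E → ℝ) : Set (E → ℝ) :=
  {t | IsState t ∧ ∃ c : ℝ, 0 < c ∧ ∀ x, t x ≤ c * s x}

lemma IsState.convexComb {t₁ t₂ : E → ℝ} (h₁ : IsState t₁) (h₂ : IsState t₂) {lam : ℝ}
    (h0 : 0 ≤ lam) (h1 : lam ≤ 1) : IsState (lam • t₁ + (1 - lam) • t₂) :=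
  ⟨(h₁.1.const_smul h0).add (h₂.1.const_smul (sub_nonneg.2 h1)), by
    simp [h₁.2, h₂.2]⟩

lemma isFace_dominatedStates {s : E → ℝ} (hs : ∀ x, 0 ≤ s x) :
    IsFace E (dominatedStates s) := by
  refine ⟨fun t ht => ht.1, ?_, ?_⟩
  · rintro t₁ ⟨ht₁, c₁, hc₁, hb₁⟩ t₂ ⟨ht₂, c₂, hc₂, hb₂⟩ lam h0 h1
    refine ⟨ht₁.convexComb ht₂ h0 h1, c₁ + c₂, add_pos hc₁ hc₂, fun x => ?_⟩
    have := hs x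
    simp only [Pi.add_apply, Pi.smul_apply, smul_eq_mul]
    nlinarith [hb₁ x, hb₂ x, ht₁.1.2 x, ht₂.1.2 x]
  · rintro t₁ ht₁ t₂ ht₂ lam h0 h1 ⟨-, c, hc, hb⟩
    have hb' : ∀ x, lam * t₁ x + (1 - lam) * t₂ x ≤ c * s x := hb
    refine ⟨⟨ht₁, c / lam, div_pos hc h0, fun x => ?_⟩,
      ⟨ht₂, c / (1 - lam), div_pos hc (sub_pos.2 h1), fun x => ?_⟩⟩
    · rw [div_mul_eq_mul_div, le_div_iff₀ h0]
      nlinarith [hb' x, ht₂.1.2 x]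
    · rw [div_mul_eq_mul_div, le_div_iff₀ (sub_pos.2 h1)]
      nlinarith [hb' x, ht₁.1.2 x]

/-- If `t ≤ c s` then `s = α t + (1 - α) u` for the state `u = (1 - α)⁻¹ (s - α t)`, where
`α = (c + 1)⁻¹`. -/
lemma dominatedStates_subset {s : E → ℝ} {F : Set (E → ℝ)} (hF : IsFace E F) (hsF : s ∈ F) :
    dominatedStates s ⊆ F := by
  rintro t ⟨ht, c, hc, hb⟩
  have hs : IsState s := hF.1 hsF
  set α := (c + 1)⁻¹
  have hα0 : 0 < α := by positivity
  have hα1 : α < 1 := inv_lt_one_of_one_lt₀ (by linarith)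
  have hαc : α * c ≤ 1 := by
    rw [← div_eq_inv_mul, div_le_one (by linarith)]; linarith
  have hne : (1 : ℝ) - α ≠ 0 := (sub_pos.2 hα1).ne'
  set u := (1 - α)⁻¹ • (s - α • t)
  have hu : IsState u := by
    refine ⟨⟨(hs.1.1.sub (ht.1.1.const_smul α)).const_smul _, fun x => ?_⟩, ?_⟩
    · refine mul_nonneg (inv_nonneg.2 (sub_pos.2 hα1).le) (sub_nonneg.2 ?_)
      calc α * t x ≤ α * (c * s x) := mul_le_mul_of_nonneg_left (hb x) hα0.le
        _ = (α * c) * s x := by ring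
        _ ≤ s x := mul_le_of_le_one_left (hs.1.2 x) hαc
    · simp only [u, Pi.smul_apply, Pi.sub_apply, smul_eq_mul, hs.2, ht.2, mul_one]
      exact inv_mul_cancel₀ hne
  have hcomb : α • t + (1 - α) • u = s := by
    simp only [u, smul_smul, mul_inv_cancel₀ hne, one_smul]
    abel
  exact (hF.2.2 t ht u hu α hα0 hα1 (hcomb ▸ hsF)).1

lemma faceGen_singleton {s : E → ℝ} (hs : IsState s) : faceGen E {s} = dominatedStates s := by
  refine subset_antisymm (Set.sInter_subset_of_mem ⟨isFace_dominatedStates hs.1.2, ?_⟩)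
    (Set.subset_sInter fun F ⟨hF, hsF⟩ => dominatedStates_subset hF (hsF rfl))
  exact Set.singleton_subset_iff.2 ⟨hs, 1, one_pos, fun x => (one_mul (s x)).ge⟩

lemma faceGen_inter_nonempty_iff {s₁ s₂ : E → ℝ} (h₁ : IsState s₁) (h₂ : IsState s₂) :
    (faceGen E {s₁} ∩ faceGen E {s₂}).Nonempty ↔
      ∃ m, IsMeasure m ∧ MLe m s₁ ∧ MLe m s₂ ∧ m ≠ 0 := by
  rw [faceGen_singleton h₁, faceGen_singleton h₂]
  constructor
  · rintro ⟨t, ⟨ht, c₁, hc₁, hb₁⟩, -, c₂, hc₂, hb₂⟩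
    set c := max c₁ c₂
    have hc : 0 < c := lt_max_of_lt_left hc₁
    have hm : IsMeasure (c⁻¹ • t) := ht.1.const_smul (inv_nonneg.2 hc.le)
    have hle : ∀ {s : E → ℝ} {c' : ℝ}, IsState s → c' ≤ c → (∀ x, t x ≤ c' * s x) →
        MLe (c⁻¹ • t) s := fun hs hc' hb =>
      mLe_of_le hm.1 hs.1.1 fun x => (inv_mul_le_iff₀ hc).2 <|
        (hb x).trans (mul_le_mul_of_nonneg_right hc' (hs.1.2 x))
    refine ⟨c⁻¹ • t, hm, hle h₁ (le_max_left _ _) hb₁, hle h₂ (le_max_right _ _) hb₂, ?_⟩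
    intro h0
    have := congrFun h0 pone
    simp [ht.2, hc.ne'] at this
  · rintro ⟨m, hm, hm₁, hm₂, hne⟩
    obtain ⟨x, hx⟩ := Function.ne_iff.1 hne
    have hpos : 0 < m pone := (lt_of_le_of_ne (hm.2 x) (Ne.symm hx)).trans_le (hm.le_apply_pone x)
    have ht : IsState ((m pone)⁻¹ • m) :=
      ⟨hm.const_smul (inv_nonneg.2 hpos.le), inv_mul_cancel₀ hpos.ne'⟩
    have hdom : ∀ {s : E → ℝ}, MLe m s → (m pone)⁻¹ • m ∈ dominatedStates s := fun hs =>
      ⟨ht, (m pone)⁻¹, inv_pos.2 hpos, fun x => mul_le_mul_of_nonneg_left (hs.le x)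
        (inv_nonneg.2 hpos.le)⟩
    exact ⟨_, hdom hm₁, hdom hm₂⟩

end Faces

/-- Proposition 4.2: for states `s₁, s₂` on a pseudo effect algebra
with (RDP), with generated faces `F₁, F₂`, the following are equivalent:
(i) `F₁ ∩ F₂ = ∅`; (ii) `s₁ ⋀ s₂ = 0` in `J(E)`; (iii) `s₁ ⋁ s₂ = s₁ + s₂` in `J(E)`;
(iv) each `x ∈ E` decomposes, up to `ε`, as `x = x₁ + x₂` with `sᵢ(x ∖ xᵢ) < ε`. -/
theorem stmt8 (hRDP : RDP E) (s₁ s₂ : E → ℝ) (h₁ : IsState s₁) (h₂ : IsState s₂) :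
    (faceGen E {s₁} ∩ faceGen E {s₂} = ∅ ↔ IsInfIn {s₁, s₂} (0 : E → ℝ)) ∧
    (faceGen E {s₁} ∩ faceGen E {s₂} = ∅ ↔ IsSupIn {s₁, s₂} (s₁ + s₂)) ∧
    (faceGen E {s₁} ∩ faceGen E {s₂} = ∅ ↔
      ∀ x : E, ∀ ε : ℝ, 0 < ε → ∃ x₁ x₂ c₁ c₂ : E,
        padd x₁ x₂ = some x ∧
        -- `c₁ = x ∖ x₁` and `c₂ = x ∖ x₂` are the (unique) left differences:
        padd c₁ x₁ = some x ∧ padd c₂ x₂ = some x ∧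
        s₁ c₁ < ε ∧ s₂ c₂ < ε) := by
  have disjoint_iff : faceGen E {s₁} ∩ faceGen E {s₂} = ∅ ↔ IsInfIn {s₁, s₂} (0 : E → ℝ) := by
    rw [isInfIn_zero_iff_forall_isMeasure hRDP h₁.1 h₂.1, ← Set.not_nonempty_iff_eq_empty,
      faceGen_inter_nonempty_iff h₁ h₂]
    push Not
    rfl
  refine ⟨disjoint_iff,
    disjoint_iff.trans (isSupIn_add_iff_isInfIn_zero h₁.1.isJordan h₂.1.isJordan).symm,
    disjoint_iff.trans ?_⟩
  rw [Set.pair_comm, isInfIn_zero_iff_infMeasure_eq_zero hRDP h₂.1 h₁.1,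
    infMeasure_eq_zero_iff h₂.1 h₁.1]
  simp only [exists_leftDiff_lt_iff h₁.1.1 h₂.1.1]

end PseudoEffectAlgebra
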